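/- If G_n and F are distribution functions with finite first moments such that G_n → F uniformly on ℝ, G_n^{-1} → F^{-1} uniformly on every interval [δ, 1−δ] with 0 < δ < 1/2, and ∫|x| dG_n(x) → ∫|x| dF(x), then the Wasserstein-1 distance ∫₀¹ |G_n^{-1}(u) − F^{-1}(u)| du converges to 0. -/

import Mathlib

open Set Filter MeasureTheory Topology

/-!
On a middle interval `M = [δ, 1 - δ]` the quantile functions are close uniformly, so
`∫_M |G_n⁻¹ - F⁻¹|` is small. Off `M` we bound `|G_n⁻¹ - F⁻¹| ≤ |G_n⁻¹| + |F⁻¹|`; convergence of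
the first moments, together with `∫_M |G_n⁻¹| ≈ ∫_M |F⁻¹|`, shows that `∫_{M^c} |G_n⁻¹|` is
eventually close to `∫_{M^c} |F⁻¹|`, which is small for small `δ` since `F⁻¹` is integrable.
-/

lemma monotoneOn_sInf_setOf_le {F : ℝ → ℝ} {a b : ℝ} (hF : Monotone F)
    (hbot : Tendsto F atBot (𝓝 a)) (htop : Tendsto F atTop (𝓝 b)) :
    MonotoneOn (fun u => sInf {y : ℝ | u ≤ F y}) (Ioo a b) := by
  intro u hu v hv huv
  obtain ⟨y₀, hy₀⟩ := (hbot.eventually (eventually_lt_nhds hu.1)).exists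
  have hbdd : BddBelow {y : ℝ | u ≤ F y} :=
    ⟨y₀, fun y hy => le_of_not_ge fun hyy₀ => (hy.trans (hF hyy₀)).not_gt hy₀⟩
  obtain ⟨y₁, hy₁⟩ := (htop.eventually (eventually_gt_nhds hv.2)).exists
  exact csInf_le_csInf hbdd ⟨y₁, hy₁.le⟩ fun y hy => huv.trans hy

lemma MonotoneOn.integrableOn_of_integrableOn_abs {f : ℝ → ℝ} {s : Set ℝ} {μ : Measure ℝ}
    (hf : MonotoneOn f s) (hs : MeasurableSet s) (hfi : IntegrableOn (fun u => |f u|) s μ) :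
    IntegrableOn f s μ :=
  (integrable_norm_iff (aemeasurable_restrict_of_monotoneOn hs hf).aestronglyMeasurable).1 hfi

-- Monotonicity makes the family bounded, so `⨆` is a genuine supremum rather than the junk value `0`.
lemma abs_sub_le_iSup_of_monotoneOn {f g : ℝ → ℝ} {a b : ℝ} (hf : MonotoneOn f (Icc a b))
    (hg : MonotoneOn g (Icc a b)) {u : ℝ} (hu : u ∈ Icc a b) :
    |f u - g u| ≤ ⨆ v : Icc a b, |f v - g v| := by
  have hab : a ≤ b := hu.1.trans hu.2
  have ha : a ∈ Icc a b := left_mem_Icc.2 hab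
  have hb : b ∈ Icc a b := right_mem_Icc.2 hab
  refine le_ciSup (f := fun v : Icc a b => |f v - g v|) ⟨max (f b - g a) (g b - f a), ?_⟩ ⟨u, hu⟩
  rintro _ ⟨⟨v, hv⟩, rfl⟩
  have hfvb := hf hv hb hv.2
  have hfav := hf ha hv hv.1
  have hgvb := hg hv hb hv.2
  have hgav := hg ha hv hv.1
  exact abs_le.2 ⟨by linarith [le_max_right (f b - g a) (g b - f a)],
    by linarith [le_max_left (f b - g a) (g b - f a)]⟩

lemma tendsto_setIntegral_Icc_add_sub {f : ℝ → ℝ} {a b : ℝ} (hf : IntegrableOn f (Ioo a b)) :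
    Tendsto (fun δ => ∫ u in Icc (a + δ) (b - δ), f u) (𝓝[>] 0) (𝓝 (∫ u in Ioo a b, f u)) := by
  have hsub : ∀ᶠ δ in 𝓝[>] (0 : ℝ), Icc (a + δ) (b - δ) ⊆ Ioo a b := by
    filter_upwards [self_mem_nhdsWithin] with δ (hδ : 0 < δ) u hu
    exact ⟨by linarith [hu.1], by linarith [hu.2]⟩
  have hind : ∀ᶠ δ in 𝓝[>] (0 : ℝ), ∫ u in Icc (a + δ) (b - δ), f u =
      ∫ u in Ioo a b, (Icc (a + δ) (b - δ)).indicator f u := by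
    filter_upwards [hsub] with δ hδ
    rw [setIntegral_indicator measurableSet_Icc, inter_eq_right.2 hδ]
  refine Tendsto.congr' (EventuallyEq.symm hind) ?_
  refine tendsto_integral_filter_of_dominated_convergence (fun u => ‖f u‖)
    (Eventually.of_forall fun δ => hf.aestronglyMeasurable.indicator measurableSet_Icc)
    (Eventually.of_forall fun δ => Eventually.of_forall fun u => norm_indicator_le_norm_self _ _)
    hf.norm ?_
  filter_upwards [ae_restrict_mem measurableSet_Ioo] with u hu
  refine tendsto_const_nhds.congr' ?_
  have hpos : (0 : ℝ) < min (u - a) (b - u) := lt_min (by linarith [hu.1]) (by linarith [hu.2])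
  filter_upwards [Ioo_mem_nhdsGT hpos] with δ hδ
  have h1 := hδ.2.trans_le (min_le_left _ _)
  have h2 := hδ.2.trans_le (min_le_right _ _)
  rw [indicator_of_mem (show u ∈ Icc (a + δ) (b - δ) from ⟨by linarith, by linarith⟩)]

lemma setIntegral_abs_sub_le_of_abs_sub_le_on {μ : Measure ℝ} {f g : ℝ → ℝ} {I M : Set ℝ} {s : ℝ}
    (hM : MeasurableSet M) (hMI : M ⊆ I) (hμM : μ M ≠ ⊤)
    (hf : IntegrableOn f I μ) (hg : IntegrableOn g I μ) (hfg : ∀ u ∈ M, |f u - g u| ≤ s) :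
    ∫ u in I, |f u - g u| ∂μ ≤ 2 * (μ.real M * s) +
      ((∫ u in I, |f u| ∂μ) - ∫ u in I, |g u| ∂μ) +
      2 * ((∫ u in I, |g u| ∂μ) - ∫ u in M, |g u| ∂μ) := by
  have hs : IntegrableOn (fun _ => s) M μ := integrableOn_const hμM
  have hfa : IntegrableOn (fun u => |f u|) I μ := hf.abs
  have hga : IntegrableOn (fun u => |g u|) I μ := hg.abs
  have hfd : IntegrableOn (fun u => |f u - g u|) I μ := (hf.sub hg).abs
  have hM_diff : ∫ u in M, |f u - g u| ∂μ ≤ μ.real M * s := by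
    rw [← smul_eq_mul, ← setIntegral_const]
    exact setIntegral_mono_on (hfd.mono_set hMI) hs hM hfg
  have hM_g : ∫ u in M, |g u| ∂μ ≤ (∫ u in M, |f u| ∂μ) + μ.real M * s := by
    rw [← smul_eq_mul, ← setIntegral_const, ← integral_add (hfa.mono_set hMI) hs]
    refine setIntegral_mono_on (hga.mono_set hMI) ((hfa.mono_set hMI).add hs) hM
      fun u hu => ?_
    have := abs_sub_abs_le_abs_sub (g u) (f u)
    rw [abs_sub_comm] at this
    linarith [hfg u hu]
  have htail : ∫ u in I \ M, |f u - g u| ∂μ ≤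
      (∫ u in I \ M, |f u| ∂μ) + ∫ u in I \ M, |g u| ∂μ := by
    rw [← integral_add (hfa.mono_set sdiff_subset) (hga.mono_set sdiff_subset)]
    exact setIntegral_mono (hfd.mono_set sdiff_subset) ((hfa.add hga).mono_set sdiff_subset)
      fun u => abs_sub _ _
  rw [setIntegral_sdiff hM hfd hMI, setIntegral_sdiff hM hfa hMI,
    setIntegral_sdiff hM hga hMI] at htail
  linarith

lemma tendsto_zero_of_le_of_tendsto {ι κ : Type*} {l : Filter ι} {l' : Filter κ} [l'.NeBot]
    {a : ι → ℝ} {b : κ → ι → ℝ} {c : κ → ℝ} (ha : ∀ n, 0 ≤ a n)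
    (hab : ∀ᶠ k in l', ∀ n, a n ≤ b k n) (hb : ∀ᶠ k in l', Tendsto (b k) l (𝓝 (c k)))
    (hc : Tendsto c l' (𝓝 0)) : Tendsto a l (𝓝 0) := by
  refine tendsto_order.2 ⟨fun ε hε => Eventually.of_forall fun n => hε.trans_le (ha n),
    fun ε hε => ?_⟩
  obtain ⟨k, hak, hbk, hck⟩ := (hab.and (hb.and (hc.eventually (gt_mem_nhds hε)))).exists
  filter_upwards [hbk.eventually (gt_mem_nhds hck)] with n hn
  exact (hak n).trans_lt hn

theorem wasserstein_convergence_of_uniform_and_moment_general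
    (G : ℕ → ℝ → ℝ) (F : ℝ → ℝ)
    (hGmono : ∀ n, Monotone (G n))
    (hGbot : ∀ n, Tendsto (G n) atBot (nhds 0)) (hGtop : ∀ n, Tendsto (G n) atTop (nhds 1))
    (hFmono : Monotone F)
    (hFbot : Tendsto F atBot (nhds 0)) (hFtop : Tendsto F atTop (nhds 1))
    -- quantile functions
    (QG : ℕ → ℝ → ℝ) (QF : ℝ → ℝ)
    (hQG : ∀ n u, QG n u = sInf {y : ℝ | u ≤ G n y})
    (hQF : ∀ u, QF u = sInf {y : ℝ | u ≤ F y})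
    -- finite first moments
    (hQGint : ∀ n, IntegrableOn (fun u => |QG n u|) (Set.Ioo (0:ℝ) 1))
    (hQFint : IntegrableOn (fun u => |QF u|) (Set.Ioo (0:ℝ) 1))
    -- uniform convergence of the quantile functions on [δ, 1-δ]
    (hqunif : ∀ δ : ℝ, 0 < δ → δ < 1/2 →
      Tendsto (fun n => ⨆ u : Set.Icc δ (1-δ), |QG n u - QF u|) atTop (nhds 0))
    -- convergence of first absolute moments
    (hmom : Tendsto (fun n => ∫ u in Set.Ioo (0:ℝ) 1, |QG n u|) atTop
      (nhds (∫ u in Set.Ioo (0:ℝ) 1, |QF u|))) :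
    Tendsto (fun n => ∫ u in Set.Ioo (0:ℝ) 1, |QG n u - QF u|) atTop (nhds 0) := by
  have hQGm n : MonotoneOn (QG n) (Ioo 0 1) := by
    rw [funext (hQG n)]
    exact monotoneOn_sInf_setOf_le (hGmono n) (hGbot n) (hGtop n)
  have hQFm : MonotoneOn QF (Ioo 0 1) := by
    rw [funext hQF]
    exact monotoneOn_sInf_setOf_le hFmono hFbot hFtop
  set tail : ℝ → ℝ := fun δ => (∫ u in Ioo 0 1, |QF u|) - ∫ u in Icc δ (1 - δ), |QF u|
  have hIcc_sub : ∀ᶠ δ in 𝓝[>] (0 : ℝ), Icc δ (1 - δ) ⊆ Ioo 0 1 := by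
    filter_upwards [self_mem_nhdsWithin] with δ (hδ : 0 < δ) u hu
    exact ⟨hδ.trans_le hu.1, by linarith [hu.2]⟩
  refine tendsto_zero_of_le_of_tendsto (l' := 𝓝[>] 0) (c := fun δ => 2 * tail δ)
    (b := fun δ n => 2 * (volume.real (Icc δ (1 - δ)) * ⨆ u : Icc δ (1 - δ), |QG n u - QF u|) +
      ((∫ u in Ioo 0 1, |QG n u|) - ∫ u in Ioo 0 1, |QF u|) + 2 * tail δ)
    (fun n => integral_nonneg fun u => abs_nonneg _) ?_ ?_ ?_
  · filter_upwards [hIcc_sub] with δ hsub n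
    exact setIntegral_abs_sub_le_of_abs_sub_le_on measurableSet_Icc hsub measure_Icc_lt_top.ne
      ((hQGm n).integrableOn_of_integrableOn_abs measurableSet_Ioo (hQGint n))
      (hQFm.integrableOn_of_integrableOn_abs measurableSet_Ioo hQFint)
      fun u hu => abs_sub_le_iSup_of_monotoneOn ((hQGm n).mono hsub) (hQFm.mono hsub) hu
  · filter_upwards [Ioo_mem_nhdsGT (by norm_num : (0 : ℝ) < 1 / 2)] with δ hδ
    convert (((hqunif δ hδ.1 hδ.2).const_mul _).const_mul 2).add (hmom.sub_const _)
      |>.add_const (2 * tail δ) using 2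
    simp
  · simpa using ((tendsto_setIntegral_Icc_add_sub (a := 0) (b := 1) hQFint).const_sub
      (∫ u in Ioo 0 1, |QF u|)).const_mul 2

/-- If distribution functions `G_n` converge uniformly to `F`, their quantile functions converge
uniformly on every `[δ, 1-δ]`, and the first absolute moments converge (expressed via the
quantile representation `∫₀¹ |G_n⁻¹| → ∫₀¹ |F⁻¹|`), then the Wasserstein-1 distance
`∫₀¹ |G_n⁻¹(u) − F⁻¹(u)| du → 0`. -/
theorem wasserstein_convergence_of_uniform_and_moment
    (G : ℕ → ℝ → ℝ) (F : ℝ → ℝ)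
    (hGmono : ∀ n, Monotone (G n)) (hGrc : ∀ n y, ContinuousWithinAt (G n) (Set.Ici y) y)
    (hGbot : ∀ n, Tendsto (G n) atBot (nhds 0)) (hGtop : ∀ n, Tendsto (G n) atTop (nhds 1))
    (hFmono : Monotone F) (hFrc : ∀ y, ContinuousWithinAt F (Set.Ici y) y)
    (hFbot : Tendsto F atBot (nhds 0)) (hFtop : Tendsto F atTop (nhds 1))
    -- quantile functions
    (QG : ℕ → ℝ → ℝ) (QF : ℝ → ℝ)
    (hQG : ∀ n u, QG n u = sInf {y : ℝ | u ≤ G n y})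
    (hQF : ∀ u, QF u = sInf {y : ℝ | u ≤ F y})
    -- finite first moments
    (hQGint : ∀ n, IntegrableOn (fun u => |QG n u|) (Set.Ioo (0:ℝ) 1))
    (hQFint : IntegrableOn (fun u => |QF u|) (Set.Ioo (0:ℝ) 1))
    -- uniform convergence of the distribution functions
    (hunif : Tendsto (fun n => ⨆ y : ℝ, |G n y - F y|) atTop (nhds 0))
    -- uniform convergence of the quantile functions on [δ, 1-δ]
    (hqunif : ∀ δ : ℝ, 0 < δ → δ < 1/2 →
      Tendsto (fun n => ⨆ u : Set.Icc δ (1-δ), |QG n u - QF u|) atTop (nhds 0))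
    -- convergence of first absolute moments
    (hmom : Tendsto (fun n => ∫ u in Set.Ioo (0:ℝ) 1, |QG n u|) atTop
      (nhds (∫ u in Set.Ioo (0:ℝ) 1, |QF u|))) :
    Tendsto (fun n => ∫ u in Set.Ioo (0:ℝ) 1, |QG n u - QF u|) atTop (nhds 0) :=
  wasserstein_convergence_of_uniform_and_moment_general G F hGmono hGbot hGtop hFmono hFbot hFtop QG
    QF hQG hQF hQGint hQFint hqunif hmom
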